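/- arXiv:2306.10629 — 2 statements merged into one kernel-verified Lean document; each statement's English description precedes it below -/
import Mathlib

section
/- For every natural number n, r₁₁(n+1) = r₁₁(n) + 1 − v₂(n+1) + r₀₁(n) − r₀₁(n+1), as an identity of integers, where r₁₁ counts occurrences of the block 11 in the binary expansion, r₀₁ counts occurrences of the block 01 in the binary expansion (counting the block at the most significant digit), and v₂ denotes the 2-adic valuation. -/
/-- Number of occurrences of the block `11` in the binary expansion of `n`. -/
def r11 (n : ℕ) : ℕ :=
  ((Finset.range n).filter (fun i => n.testBit i = true ∧ n.testBit (i + 1) = true)).card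

/-- Number of occurrences of the block `01` in the binary expansion of `n`,
counting the occurrence at the most significant digit. -/
def r01 (n : ℕ) : ℕ :=
  ((Finset.range n).filter (fun i => n.testBit i = true ∧ n.testBit (i + 1) = false)).card

/-- Number of `1` bits of `n`. -/
def onesN (n : ℕ) : ℕ :=
  ((Finset.range n).filter (fun i => n.testBit i = true)).card

lemma testBit_false_of_le {n i : ℕ} (h : n ≤ i) : n.testBit i = false :=
  Nat.testBit_eq_false_of_lt (lt_of_lt_of_le (Nat.lt_two_pow_self (n := n))
    (Nat.pow_le_pow_right (by norm_num) h))

lemma onesN_eq (n N : ℕ) (h : n ≤ N) :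
    onesN n = ((Finset.range N).filter (fun i => n.testBit i = true)).card := by
  unfold onesN
  congr 1
  ext i
  simp only [Finset.mem_filter, Finset.mem_range]
  constructor
  · rintro ⟨hi, hb⟩; exact ⟨lt_of_lt_of_le hi h, hb⟩
  · rintro ⟨hi, hb⟩
    refine ⟨?_, hb⟩
    by_contra hn
    rw [testBit_false_of_le (le_of_not_gt hn)] at hb
    simp at hb

lemma onesN_div2 (n : ℕ) : onesN n = onesN (n / 2) + n % 2 := by
  rw [onesN_eq n (n + 1) (by omega), onesN_eq (n / 2) n (by omega)]
  rw [Finset.card_filter, Finset.card_filter, Finset.sum_range_succ']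
  congr 1
  · apply Finset.sum_congr rfl
    intro i _
    rw [Nat.testBit_succ]
  · rw [Nat.testBit_zero]
    rcases Nat.mod_two_eq_zero_or_one n with h | h <;> simp [h]

lemma onesN_succ (n : ℕ) : onesN n + 1 = onesN (n + 1) + padicValNat 2 (n + 1) := by
  induction n using Nat.strong_induction_on with
  | _ n ih =>
    rcases Nat.even_or_odd n with ⟨k, hk⟩ | ⟨k, hk⟩
    · subst hk
      have hodd : ¬ (2 ∣ (k + k + 1)) := by omega
      rw [padicValNat.eq_zero_of_not_dvd hodd]
      rw [onesN_div2 (k + k), onesN_div2 (k + k + 1)]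
      have h1 : (k + k) / 2 = k := by omega
      have h2 : (k + k + 1) / 2 = k := by omega
      rw [h1, h2]
      omega
    · subst hk
      have h1 : (2 * k + 1) / 2 = k := by omega
      have h2 : (2 * k + 1 + 1) = 2 * (k + 1) := by ring
      have h3 : padicValNat 2 (2 * (k + 1)) = 1 + padicValNat 2 (k + 1) := by
        rw [padicValNat.mul (by norm_num) (by omega), padicValNat.self (by norm_num)]
      rw [onesN_div2 (2 * k + 1), h1, h2, h3, onesN_div2 (2 * (k + 1))]
      have h4 : 2 * (k + 1) / 2 = k + 1 := by omega
      have h5 : 2 * (k + 1) % 2 = 0 := by omega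
      rw [h4, h5]
      have := ih k (by omega)
      omega

lemma r11_add_r01 (n : ℕ) : r11 n + r01 n = onesN n := by
  unfold r11 r01 onesN
  have := Finset.card_filter_add_card_filter_not
    (s := (Finset.range n).filter (fun i => n.testBit i = true))
    (p := fun i => n.testBit (i + 1) = true)
  rw [Finset.filter_filter, Finset.filter_filter] at this
  rw [← this]
  congr 2
  apply Finset.filter_congr
  intro i _
  simp [Bool.not_eq_true]

theorem stmt_1 (n : ℕ) :
    (r11 (n + 1) : ℤ) =
      (r11 n : ℤ) + 1 - (padicValNat 2 (n + 1) : ℤ) + (r01 n : ℤ) - (r01 (n + 1) : ℤ) := by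
  have h1 := r11_add_r01 n
  have h2 := r11_add_r01 (n + 1)
  have h3 := onesN_succ n
  omega
end

section
/- For every natural number n and every natural number i ≥ 1, r₁₁(n+i) = r₁₁(n) + i − Σ_{j=1}^{i} v₂(n+j) + r₀₁(n) − r₀₁(n+i), as an identity of integers. -/
open Finset

namespace Nat

theorem padicValNat_factorial_add (p : ℕ) [Fact p.Prime] (n i : ℕ) :
    padicValNat p (n + i)! = padicValNat p n ! + ∑ j ∈ Icc 1 i, padicValNat p (n + j) := by
  induction i with
  | zero => simp
  | succ i ih =>
    rw [← add_assoc, factorial_succ, padicValNat.mul (by omega) (factorial_ne_zero _), ih,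
      sum_Icc_succ_top (by omega), add_assoc]
    ring

theorem sum_digits_add_sub_one_mul_sum_padicValNat (p : ℕ) [Fact p.Prime] (n i : ℕ) :
    (p.digits (n + i)).sum + (p - 1) * ∑ j ∈ Icc 1 i, padicValNat p (n + j) =
      (p.digits n).sum + i := by
  have legendre (m : ℕ) : (p - 1) * padicValNat p m ! + (p.digits m).sum = m := by
    have := sub_one_mul_padicValNat_factorial (p := p) m
    have := digit_sum_le p m
    omega
  have := congrArg ((p - 1) * ·) (padicValNat_factorial_add p n i)
  simp only [mul_add] at this
  have := legendre n
  have := legendre (n + i)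
  omega

theorem length_bitIndices (m : ℕ) : m.bitIndices.length = (digits 2 m).sum := by
  induction m using Nat.strong_induction_on with
  | _ m ih =>
    rcases m.even_or_odd' with ⟨k, rfl | rfl⟩
    · rcases k.eq_zero_or_pos with rfl | hk
      · simp
      · rw [bitIndices_two_mul, List.length_map, digits_def' one_lt_two (by omega),
          List.sum_cons, show 2 * k / 2 = k by omega, ih k (by omega)]
        omega
    · rw [bitIndices_two_mul_add_one, List.length_cons, List.length_map,
        digits_def' one_lt_two (by omega), List.sum_cons, show (2 * k + 1) / 2 = k by omega,
        ih k (by omega)]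
      omega

theorem card_filter_testBit (m : ℕ) :
    #{i ∈ range m | m.testBit i} = m.bitIndices.length := by
  rw [← List.toFinset_card_of_nodup bitIndices_nodup]
  congr 1
  ext i
  simp only [mem_filter, mem_range, List.mem_toFinset, mem_bitIndices, and_iff_right_iff_imp]
  intro h
  exact Nat.lt_two_pow_self.trans_le (two_pow_le_of_mem_bitIndices (mem_bitIndices.2 h))

end Nat

theorem r11_add_r01_s9 (m : ℕ) : r11 m + r01 m = (Nat.digits 2 m).sum := by
  rw [← Nat.length_bitIndices, ← Nat.card_filter_testBit, r11, r01, ← card_union_of_disjoint]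
  · congr 1
    ext i
    simp only [mem_union, mem_filter]
    cases m.testBit (i + 1) <;> simp
  · exact disjoint_filter.2 fun _ _ h1 h2 => by simp_all

theorem stmt_9_general (n i : ℕ) :
    (r11 (n + i) : ℤ) =
      (r11 n : ℤ) + (i : ℤ) - ∑ j ∈ Finset.Icc 1 i, (padicValNat 2 (n + j) : ℤ)
        + (r01 n : ℤ) - (r01 (n + i) : ℤ) := by
  have h := Nat.sum_digits_add_sub_one_mul_sum_padicValNat 2 n i
  rw [← r11_add_r01_s9, ← r11_add_r01_s9, show 2 - 1 = 1 from rfl, one_mul] at h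
  rw [← Nat.cast_sum]
  omega

theorem stmt_9 (n i : ℕ) (hi : 1 ≤ i) :
    (r11 (n + i) : ℤ) =
      (r11 n : ℤ) + (i : ℤ) - ∑ j ∈ Finset.Icc 1 i, (padicValNat 2 (n + j) : ℤ)
        + (r01 n : ℤ) - (r01 (n + i) : ℤ) :=
  stmt_9_general n i
end
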